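/- arXiv:1804.06138 — 3 statements merged into one kernel-verified Lean document; each statement's English description precedes it below -/
import Mathlib

section
/- Let q be a prime power, n a positive integer, and let C be a cyclic code of length n over F_{q^2}, i.e., an ideal of F_{q^2}[x]/⟨x^n − 1⟩, with generator polynomial g(x) (the unique monic divisor of x^n − 1 whose image generates C), and set h(x) = (x^n − 1)/g(x). Then C ∩ C^{⊥_H} = {0} if and only if gcd(g(x), h†(x)) = 1. -/
open Polynomial

/-- The reciprocal polynomial `f*(x) = x^(deg f) * f(0)⁻¹ * f(1/x)`. -/
noncomputable def crecip {F : Type*} [Field F] (f : F[X]) : F[X] :=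
  C (f.coeff 0)⁻¹ * f.reverse

/-- The conjugate-reciprocal polynomial `f†`, obtained by applying the
conjugation `a ↦ a ^ q` to each coefficient of `f*`. -/
noncomputable def cdagger {F : Type*} [Field F] (q : ℕ) (f : F[X]) : F[X] :=
  (crecip f).sum fun i a => C (a ^ q) * X ^ i

/-- A polynomial is SCRIM if it is monic, irreducible, and self-conjugate-reciprocal. -/
def IsSCRIM {F : Type*} [Field F] (q : ℕ) (f : F[X]) : Prop :=
  f.Monic ∧ Irreducible f ∧ f = cdagger q f

/-- The set `Ω_{q²,n}` of SCRIM factors of `x^n - 1` over `F = F_{q²}`. -/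
def scrimFactors (F : Type*) [Field F] (q n : ℕ) : Set F[X] :=
  {f | IsSCRIM q f ∧ f ∣ X ^ n - 1}

/-- The codewords of a cyclic code, viewed as the polynomials of degree `< n`
in the ideal `C` of `F[x]` corresponding to the ideal `C` of `F[x]/⟨x^n - 1⟩`. -/
def codewords {F : Type*} [Field F] (C : Ideal F[X]) (n : ℕ) : Set F[X] :=
  {f | f ∈ C ∧ f.degree < (n : WithBot ℕ)}

/-- The Hermitian dual code `C^⊥H`, as a set of polynomials of degree `< n`. -/
def hermDual {F : Type*} [Field F] (q : ℕ) (C : Ideal F[X]) (n : ℕ) : Set F[X] :=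
  {u | u.degree < (n : WithBot ℕ) ∧ ∀ v ∈ C, v.degree < (n : WithBot ℕ) →
      ∑ i ∈ Finset.range n, u.coeff i * (v.coeff i) ^ q = 0}

/-!
Let `σ` be the Frobenius `a ↦ a ^ q` and `H = reverse (h^σ)`, a unit multiple of `h†`; then
`reverse (g^σ) * H = 1 - X ^ n`. The Hermitian product of `u` with `g * X ^ j` is a coefficient of
`u * reverse (g^σ)`, so `u` is orthogonal to `C` exactly when the coefficients of
`u * reverse (g^σ)` in degrees `deg g ≤ i < n` vanish, which (dividing by `X ^ n` and using
`1 - X ^ n = reverse (g^σ) * H`) happens exactly when `H ∣ u`. So `C ∩ C^⊥H` consists of the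
common multiples of `g` and `H` of degree `< n = deg g + deg H`, and these are all zero iff
`g` and `H` are coprime.
-/

section CoeffDot

variable {R : Type*} [CommSemiring R]

def coeffDot (n : ℕ) (u w : R[X]) : R :=
  ∑ i ∈ Finset.range n, u.coeff i * w.coeff i

lemma coeffDot_C_mul (n : ℕ) (u w : R[X]) (a : R) :
    coeffDot n u (C a * w) = a * coeffDot n u w := by
  simp only [coeffDot, coeff_C_mul, Finset.mul_sum]
  exact Finset.sum_congr rfl fun _ _ => mul_left_comm _ _ _

lemma coeffDot_sum {ι : Type*} (s : Finset ι) (n : ℕ) (u : R[X]) (w : ι → R[X]) :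
    coeffDot n u (∑ j ∈ s, w j) = ∑ j ∈ s, coeffDot n u (w j) := by
  simp only [coeffDot, finsetSum_coeff, Finset.mul_sum]
  exact Finset.sum_comm

lemma coeffDot_succ_eq_coeff_mul_reflect (N : ℕ) (u w : R[X]) :
    coeffDot (N + 1) u w = (u * reflect N w).coeff N := by
  rw [coeffDot, coeff_mul, Finset.Nat.sum_antidiagonal_eq_sum_range_succ_mk]
  refine Finset.sum_congr rfl fun i hi => ?_
  rw [coeff_reflect, revAt_le (Nat.sub_le _ _),
    Nat.sub_sub_self (Nat.lt_succ_iff.1 (Finset.mem_range.1 hi))]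

lemma coeffDot_mul_X_pow (u w : R[X]) {n j : ℕ} (hj : w.natDegree + j < n) :
    coeffDot n u (w * X ^ j) = (u * w.reverse).coeff (w.natDegree + j) := by
  obtain ⟨N, rfl⟩ : ∃ N, n = N + 1 := ⟨n - 1, by omega⟩
  obtain ⟨M, rfl⟩ : ∃ M, N = w.natDegree + M := ⟨N - w.natDegree, by omega⟩
  rw [coeffDot_succ_eq_coeff_mul_reflect,
    reflect_mul (F := w.natDegree) (G := M) _ _ le_rfl ((natDegree_X_pow_le j).trans (by omega)),
    reflect_monomial, revAt_le (by omega), ← reverse, ← mul_assoc, coeff_mul_X_pow',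
    if_pos (by omega)]
  congr 1
  omega

lemma coeffDot_mul_eq_zero {n : ℕ} {u w : R[X]}
    (hw : ∀ j, w.natDegree + j < n → coeffDot n u (w * X ^ j) = 0) {m : R[X]}
    (hm : w.natDegree + m.natDegree < n) : coeffDot n u (w * m) = 0 := by
  rw [m.as_sum_range_C_mul_X_pow, Finset.mul_sum, coeffDot_sum]
  refine Finset.sum_eq_zero fun j hj => ?_
  rw [mul_left_comm, coeffDot_C_mul, hw j (by rw [Finset.mem_range] at hj; omega), mul_zero]

end CoeffDot

section Reciprocal

lemma reverse_X_pow_sub_one {R : Type*} [Ring R] [Nontrivial R] (n : ℕ) :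
    (X ^ n - 1 : R[X]).reverse = 1 - X ^ n := by
  have h := reverse_add_C (X ^ n : R[X]) (-1)
  rw [map_neg, map_one, ← sub_eq_add_neg] at h
  have h1 : (X ^ n : R[X]).reverse = 1 := by
    simpa using (reverse_X_pow_mul 1 n).trans (by simpa using reverse_C (1 : R))
  rw [h, h1, natDegree_X_pow, neg_one_mul, sub_eq_add_neg]

lemma natDegree_one_sub_X_pow {R : Type*} [Ring R] [Nontrivial R] (n : ℕ) :
    (1 - X ^ n : R[X]).natDegree = n := by
  rw [← neg_sub, natDegree_neg, ← C_1, natDegree_X_pow_sub_C]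

lemma reverse_map_mul_reverse_map {R S : Type*} [CommRing R] [CommRing S] [IsDomain S]
    (σ : R →+* S) {n : ℕ} {g h : R[X]} (hgh : X ^ n - 1 = g * h) :
    (g.map σ).reverse * (h.map σ).reverse = 1 - X ^ n := by
  rw [← reverse_mul_of_domain, ← Polynomial.map_mul, ← hgh, Polynomial.map_sub,
    Polynomial.map_pow, map_X, Polynomial.map_one, reverse_X_pow_sub_one]

lemma coeff_zero_ne_zero_of_X_pow_sub_one_eq_mul {R : Type*} [Ring R] [Nontrivial R]
    {n : ℕ} (hn : 0 < n) {g h : R[X]} (hgh : X ^ n - 1 = g * h) : g.coeff 0 ≠ 0 := by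
  intro hg
  have := congrArg (coeff · 0) hgh
  simp [mul_coeff_zero, hg, hn.ne] at this

lemma natDegree_reverse_map {K L : Type*} [Field K] [Semiring L] [Nontrivial L] (σ : K →+* L)
    {f : K[X]} (hf : f.coeff 0 ≠ 0) : (f.map σ).reverse.natDegree = f.natDegree := by
  rw [reverse_natDegree, natDegree_map,
    natTrailingDegree_eq_zero.2 (Or.inr (by rwa [coeff_map, _root_.map_ne_zero])), Nat.sub_zero]

end Reciprocal

lemma exists_eq_add_X_pow_mul_of_coeff_eq_zero {R : Type*} [Ring R] [Nontrivial R] {P : R[X]}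
    {k n : ℕ} (hP : P.natDegree < n + k) (hcoeff : ∀ i, k ≤ i → i < n → P.coeff i = 0) :
    ∃ Q r : R[X], P = r + X ^ n * Q ∧ r.degree < k ∧ Q.degree < k := by
  set Q := P /ₘ X ^ n
  set r := P %ₘ X ^ n
  have hPQr : r + X ^ n * Q = P := modByMonic_add_div P _
  have hr : r.degree < n := by simpa using degree_modByMonic_lt P (monic_X_pow (R := R) n)
  refine ⟨Q, r, hPQr.symm, (degree_lt_iff_coeff_zero _ _).2 fun i hi => ?_,
    (degree_lt_iff_coeff_zero _ _).2 fun i hi => ?_⟩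
  · rcases lt_or_ge i n with hin | hin
    · rw [← hcoeff i hi hin, ← hPQr, coeff_add, coeff_X_pow_mul', if_neg (by omega), add_zero]
    · exact coeff_eq_zero_of_degree_lt (hr.trans_le (by exact_mod_cast hin))
  · have := congrArg (coeff · (i + n)) hPQr
    simp only [coeff_add, coeff_X_pow_mul, coeff_eq_zero_of_degree_lt
      (hr.trans_le (by exact_mod_cast Nat.le_add_left n i)), zero_add] at this
    rw [this, coeff_eq_zero_of_natDegree_lt (by omega)]

lemma dvd_iff_coeff_mul_eq_zero {R : Type*} [CommRing R] [IsDomain R] {n : ℕ} (hn : 0 < n)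
    {G H u : R[X]} (hGH : G * H = 1 - X ^ n) (hu : u.degree < n) :
    H ∣ u ↔ ∀ i, G.natDegree ≤ i → i < n → (u * G).coeff i = 0 := by
  have hGH0 : G * H ≠ 0 := by
    rw [hGH]; exact ne_zero_of_natDegree_gt (n := 0) (by rwa [natDegree_one_sub_X_pow])
  have hG : G ≠ 0 := left_ne_zero_of_mul hGH0
  have hH : H ≠ 0 := right_ne_zero_of_mul hGH0
  have hdeg : G.natDegree + H.natDegree = n := by
    rw [← natDegree_mul hG hH, hGH, natDegree_one_sub_X_pow]
  have hun : u.natDegree < n := by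
    rcases eq_or_ne u 0 with rfl | hu0
    · simpa using hn
    · exact (natDegree_lt_iff_degree_lt hu0).2 hu
  constructor
  · rintro ⟨s, rfl⟩ i hi hin
    have hs : s.coeff i = 0 := by
      rcases eq_or_ne s 0 with rfl | hs0
      · simp
      · rw [natDegree_mul hH hs0] at hun
        exact coeff_eq_zero_of_natDegree_lt (by omega)
    rw [mul_right_comm, mul_comm H, hGH, sub_mul, one_mul, coeff_sub, coeff_X_pow_mul',
      if_neg (by omega), hs, sub_zero]
  · intro hcoeff
    obtain ⟨Q, r, hP, hr, hQ⟩ := exists_eq_add_X_pow_mul_of_coeff_eq_zero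
      (natDegree_mul_le.trans_lt (by omega)) hcoeff
    -- `G * H = 1 - X ^ n` cancels the `X ^ n * Q` part of `u * G`
    have hGuHQ : G * (u + H * Q) = r + Q := by linear_combination hP + Q * hGH
    have huHQ : u + H * Q = 0 := by
      by_contra hne
      have := degree_le_of_dvd (dvd_mul_right G _) (mul_ne_zero hG hne)
      rw [hGuHQ, degree_eq_natDegree hG] at this
      exact this.not_gt ((degree_add_le _ _).trans_lt (max_lt hr hQ))
    exact ⟨-Q, by linear_combination huHQ⟩

lemma forall_mem_span_coeffDot_map_eq_zero_iff {K L : Type*} [Field K] [CommRing L]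
    [Nontrivial L] (σ : K →+* L) {n : ℕ} {g : K[X]} (hg : g ≠ 0) (u : L[X]) :
    (∀ v ∈ Ideal.span {g}, v.degree < n → coeffDot n u (v.map σ) = 0) ↔
      ∀ j, g.natDegree + j < n → coeffDot n u (g.map σ * X ^ j) = 0 := by
  simp only [Ideal.mem_span_singleton]
  constructor
  · intro hv j hj
    have hdeg : (g * X ^ j).degree < (n : WithBot ℕ) :=
      degree_le_natDegree.trans_lt (by rw [natDegree_mul_X_pow j hg]; exact_mod_cast hj)
    simpa using hv _ (dvd_mul_right g _) hdeg
  · rintro hj _ ⟨m, rfl⟩ hv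
    rcases eq_or_ne m 0 with rfl | hm
    · simp [coeffDot]
    rw [Polynomial.map_mul]
    refine coeffDot_mul_eq_zero (by simpa using hj) ?_
    rw [natDegree_map, natDegree_map, ← natDegree_mul hg hm]
    exact (natDegree_lt_iff_degree_lt (mul_ne_zero hg hm)).2 hv

lemma forall_mem_span_coeffDot_map_eq_zero_iff_dvd {K L : Type*} [Field K] [Field L]
    (σ : K →+* L) {n : ℕ} (hn : 0 < n) {g h : K[X]} (hgh : X ^ n - 1 = g * h) {u : L[X]}
    (hu : u.degree < n) :
    (∀ v ∈ Ideal.span {g}, v.degree < n → coeffDot n u (v.map σ) = 0) ↔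
      (h.map σ).reverse ∣ u := by
  have hg0 := coeff_zero_ne_zero_of_X_pow_sub_one_eq_mul hn hgh
  have hg : g ≠ 0 := fun h0 => hg0 (by simp [h0])
  rw [dvd_iff_coeff_mul_eq_zero hn (reverse_map_mul_reverse_map σ hgh) hu,
    forall_mem_span_coeffDot_map_eq_zero_iff σ hg, natDegree_reverse_map σ hg0]
  constructor
  · intro hj i hi hin
    obtain ⟨j, rfl⟩ := Nat.exists_eq_add_of_le hi
    rw [← hj j hin, coeffDot_mul_X_pow u (g.map σ) (by rwa [natDegree_map]), natDegree_map]
  · intro hi j hj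
    rw [coeffDot_mul_X_pow u (g.map σ) (by rwa [natDegree_map]), natDegree_map]
    exact hi _ (Nat.le_add_right _ j) hj

lemma exists_ringHom_eq_pow_of_card_eq_pow {F : Type*} [Field F] [Fintype F] {q m : ℕ}
    (hq : IsPrimePow q) (hF : Fintype.card F = q ^ m) :
    ∃ σ : F →+* F, ∀ x, σ x = x ^ q := by
  obtain ⟨p, e, hp, -, rfl⟩ := hq
  have : Fact p.Prime := ⟨hp.nat_prime⟩
  have : CharP F p := charP_of_card_eq_prime_pow (f := e * m) (by rw [hF, pow_mul])
  exact ⟨iterateFrobenius F p e, iterateFrobenius_def p e⟩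

lemma cdagger_eq_C_mul_reverse_map {F : Type*} [Field F] {q : ℕ} {σ : F →+* F}
    (hσ : ∀ x, σ x = x ^ q) (f : F[X]) :
    cdagger q f = C (σ (f.coeff 0))⁻¹ * (f.map σ).reverse := by
  have hmap : cdagger q f = (crecip f).map σ := by
    rw [cdagger, Polynomial.map, eval₂_eq_sum]
    simp only [RingHom.coe_comp, Function.comp_apply, hσ]
  rw [hmap, crecip, Polynomial.map_mul, map_C, map_inv₀, reverse, reverse, natDegree_map,
    reflect_map]

lemma isCoprime_iff_forall_dvd_dvd_degree_lt {K : Type*} [Field K] {f g : K[X]} (hf : f ≠ 0)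
    (hg : g ≠ 0) :
    IsCoprime f g ↔ ∀ u, f ∣ u → g ∣ u → u.degree < (f * g).degree → u = 0 := by
  constructor
  · intro hfg u hfu hgu hu
    by_contra hu0
    exact (degree_le_of_dvd (hfg.mul_dvd hfu hgu) hu0).not_gt hu
  · classical
    intro hu
    by_contra hfg
    set d := EuclideanDomain.gcd f g
    obtain ⟨e, he⟩ : d ∣ g := EuclideanDomain.gcd_dvd_right f g
    have hd0 : d ≠ 0 := fun h0 => hf (EuclideanDomain.gcd_eq_zero_iff.1 h0).1
    have hd : 0 < d.natDegree := natDegree_pos_iff_degree_pos.2 <|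
      degree_pos_of_ne_zero_of_nonunit hd0 fun hunit => hfg (EuclideanDomain.gcd_isUnit_iff.1 hunit)
    have he0 : e ≠ 0 := by rintro rfl; exact hg (by simpa using he)
    -- `f * (g / gcd f g)` is a nonzero common multiple of degree `< deg (f * g)`
    refine mul_ne_zero hf he0 (hu (f * e) (dvd_mul_right f e) ?_ ?_)
    · rw [he]; exact mul_dvd_mul_right (EuclideanDomain.gcd_dvd_left f g) e
    · rw [he, mul_left_comm]
      apply degree_lt_degree
      rw [natDegree_mul hd0 (mul_ne_zero hf he0)]
      omega

theorem stmt14_general {q n : ℕ} (hq : IsPrimePow q)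
    {F : Type*} [Field F] [Fintype F] (hF : Fintype.card F = q ^ 2)
    (hn : 0 < n) (C : Ideal F[X]) (g h : F[X])
    (hC : C = Ideal.span {g}) (hh : X ^ n - 1 = g * h) :
    codewords C n ∩ hermDual q C n = {0} ↔ IsCoprime g (cdagger q h) := by
  obtain ⟨σ, hσ⟩ := exists_ringHom_eq_pow_of_card_eq_pow hq hF
  have hg0 := coeff_zero_ne_zero_of_X_pow_sub_one_eq_mul hn hh
  have hh0 := coeff_zero_ne_zero_of_X_pow_sub_one_eq_mul hn (hh.trans (mul_comm g h))
  have hg : g ≠ 0 := fun h0 => hg0 (by simp [h0])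
  have hh' : h ≠ 0 := fun h0 => hh0 (by simp [h0])
  set H := (h.map σ).reverse
  have hH : H ≠ 0 := fun h0 => hh' (by simpa [H] using h0)
  have hdeg : (g * H).degree = n := by
    rw [degree_eq_natDegree (mul_ne_zero hg hH), natDegree_mul hg hH, natDegree_reverse_map σ hh0,
      ← natDegree_mul hg hh', ← hh, ← C_1, natDegree_X_pow_sub_C]
  have hcode : ∀ u, u ∈ codewords C n ↔ g ∣ u ∧ u.degree < n := fun u => by
    rw [codewords, Set.mem_ofPred_eq, hC, Ideal.mem_span_singleton]
  have hdual : ∀ u, u ∈ hermDual q C n ↔ u.degree < n ∧ H ∣ u := fun u =>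
    and_congr_right fun hu => by
      rw [← forall_mem_span_coeffDot_map_eq_zero_iff_dvd σ hn hh hu, hC]
      simp only [coeffDot, coeff_map, hσ]
  rw [cdagger_eq_C_mul_reverse_map hσ,
    isCoprime_mul_unit_left_right (isUnit_C.2 (by simpa using hh0)),
    isCoprime_iff_forall_dvd_dvd_degree_lt hg hH, hdeg, Set.eq_singleton_iff_unique_mem]
  simp only [Set.mem_inter_iff, hcode, hdual]
  have h0 : degree (0 : F[X]) < n := by rw [degree_zero]; exact WithBot.bot_lt_coe n
  exact ⟨fun hs u hgu hHu hu => hs.2 u ⟨⟨hgu, hu⟩, hu, hHu⟩,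
    fun hs => ⟨⟨⟨dvd_zero g, h0⟩, h0, dvd_zero H⟩,
      fun u hu => hs u hu.1.1 hu.2.2 hu.2.1⟩⟩

theorem stmt14 {q n : ℕ} (hq : IsPrimePow q)
    {F : Type*} [Field F] [Fintype F] (hF : Fintype.card F = q ^ 2)
    (hn : 0 < n) (C : Ideal F[X]) (g h : F[X])
    (hg : g.Monic) (hgd : g ∣ X ^ n - 1) (hC : C = Ideal.span {g})
    (hh : X ^ n - 1 = g * h) :
    codewords C n ∩ hermDual q C n = {0} ↔ IsCoprime g (cdagger q h) :=
  stmt14_general hq hF hn C g h hC hh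
end

section
/- Let q be a prime power, n a positive integer, g(x) a monic divisor of x^n − 1 in F_{q^2}[x], and h(x) = (x^n − 1)/g(x). Then gcd(g(x), h†(x)) = 1 if and only if g(x) is self-conjugate-reciprocal (g = g†) and every monic irreducible factor of g(x) has the same multiplicity in g(x) as in x^n − 1. -/
open Polynomial

namespace SCRIMAux

variable {F : Type*} [Field F]

lemma crecip_def (f : F[X]) : crecip f = C (f.coeff 0)⁻¹ * f.reverse := rfl

lemma ntd_zero {f : F[X]} (h0 : f.coeff 0 ≠ 0) : f.natTrailingDegree = 0 :=
  natTrailingDegree_eq_zero.mpr (Or.inr h0)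

lemma reverse_reverse_eq {f : F[X]} (h0 : f.coeff 0 ≠ 0) : f.reverse.reverse = f := by
  have hd : f.reverse.natDegree = f.natDegree := by
    rw [reverse_natDegree, ntd_zero h0, Nat.sub_zero]
  ext n
  rw [coeff_reverse, coeff_reverse, hd, revAt_invol]

lemma trailingCoeff_eq {f : F[X]} (h0 : f.coeff 0 ≠ 0) : f.trailingCoeff = f.coeff 0 := by
  rw [trailingCoeff, ntd_zero h0]

lemma crecip_natDegree {f : F[X]} (h0 : f.coeff 0 ≠ 0) :
    (crecip f).natDegree = f.natDegree := by
  rw [crecip_def, natDegree_C_mul (inv_ne_zero h0), reverse_natDegree, ntd_zero h0,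
    Nat.sub_zero]

lemma crecip_monic {f : F[X]} (h0 : f.coeff 0 ≠ 0) : (crecip f).Monic := by
  have : (crecip f).leadingCoeff = 1 := by
    rw [crecip_def, leadingCoeff_mul, leadingCoeff_C, reverse_leadingCoeff,
      trailingCoeff_eq h0, inv_mul_cancel₀ h0]
  exact this

lemma crecip_coeff_zero (f : F[X]) :
    (crecip f).coeff 0 = (f.coeff 0)⁻¹ * f.leadingCoeff := by
  rw [crecip_def, mul_coeff_zero, coeff_C_zero, coeff_zero_reverse]

lemma crecip_mul {f g : F[X]} (hf : f.coeff 0 ≠ 0) (hg : g.coeff 0 ≠ 0) :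
    crecip (f * g) = crecip f * crecip g := by
  rw [crecip_def, crecip_def, crecip_def, mul_coeff_zero, reverse_mul_of_domain, mul_inv,
    C_mul]
  ring

lemma reverse_C (a : F) : (C a).reverse = C a := by
  rw [reverse, natDegree_C, reflect_C, pow_zero, mul_one]

lemma crecip_crecip {f : F[X]} (hm : f.Monic) (h0 : f.coeff 0 ≠ 0) :
    crecip (crecip f) = f := by
  have h1 : (crecip f).coeff 0 = (f.coeff 0)⁻¹ := by
    rw [crecip_coeff_zero, hm.leadingCoeff, mul_one]
  have h2 : (crecip f).reverse = C (f.coeff 0)⁻¹ * f := by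
    rw [crecip_def, reverse_mul_of_domain, reverse_C, reverse_reverse_eq h0]
  calc crecip (crecip f) = C ((crecip f).coeff 0)⁻¹ * (crecip f).reverse := rfl
    _ = C ((f.coeff 0)⁻¹)⁻¹ * (C (f.coeff 0)⁻¹ * f) := by rw [h1, h2]
    _ = f := by rw [inv_inv, ← mul_assoc, ← C_mul, mul_inv_cancel₀ h0, C_1, one_mul]

lemma map_reverse' (σ : F →+* F) (f : F[X]) : (f.map σ).reverse = f.reverse.map σ := by
  ext n
  rw [coeff_reverse, coeff_map, coeff_map, coeff_reverse, natDegree_map]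

lemma crecip_map (σ : F →+* F) (f : F[X]) : crecip (f.map σ) = (crecip f).map σ := by
  rw [crecip_def, crecip_def, Polynomial.map_mul, map_C, map_inv₀ σ, coeff_map, map_reverse']

/-- The conjugate-reciprocal operation, expressed via a ring hom. -/
noncomputable def D (σ : F →+* F) (f : F[X]) : F[X] := (crecip f).map σ

lemma cdagger_eq {q : ℕ} (σ : F →+* F) (hσ : ∀ a, σ a = a ^ q) (f : F[X]) :
    cdagger q f = D σ f := by
  show (crecip f).sum (fun i a => C (a ^ q) * X ^ i) = eval₂ (C.comp σ) X (crecip f)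
  rw [eval₂_eq_sum]
  simp only [RingHom.coe_comp, Function.comp_apply, hσ]

lemma D_coeff_zero (σ : F →+* F) (f : F[X]) :
    (D σ f).coeff 0 = σ ((f.coeff 0)⁻¹ * f.leadingCoeff) := by
  rw [D, coeff_map, crecip_coeff_zero]

lemma D_coeff_zero_ne (σ : F →+* F) {f : F[X]} (h0 : f.coeff 0 ≠ 0) (hf : f ≠ 0) :
    (D σ f).coeff 0 ≠ 0 := by
  rw [D_coeff_zero]
  intro hc
  exact mul_ne_zero (inv_ne_zero h0) (leadingCoeff_ne_zero.mpr hf)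
    (σ.injective (by rw [hc, map_zero]))

lemma D_monic (σ : F →+* F) {f : F[X]} (h0 : f.coeff 0 ≠ 0) : (D σ f).Monic :=
  (crecip_monic h0).map σ

lemma D_natDegree (σ : F →+* F) {f : F[X]} (h0 : f.coeff 0 ≠ 0) :
    (D σ f).natDegree = f.natDegree := by
  rw [D, natDegree_map, crecip_natDegree h0]

lemma D_mul (σ : F →+* F) {f g : F[X]} (hf : f.coeff 0 ≠ 0) (hg : g.coeff 0 ≠ 0) :
    D σ (f * g) = D σ f * D σ g := by
  rw [D, crecip_mul hf hg, Polynomial.map_mul]; rfl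

lemma D_D (σ : F →+* F) (hinv : ∀ a, σ (σ a) = a) {f : F[X]} (hm : f.Monic)
    (h0 : f.coeff 0 ≠ 0) : D σ (D σ f) = f := by
  have hid : σ.comp σ = RingHom.id F := RingHom.ext hinv
  rw [D, D, crecip_map, crecip_crecip hm h0, Polynomial.map_map, hid, Polynomial.map_id]

lemma D_dvd (σ : F →+* F) {f g : F[X]} (h : f ∣ g) (hf : f.coeff 0 ≠ 0)
    (hg : g.coeff 0 ≠ 0) : D σ f ∣ D σ g := by
  obtain ⟨r, rfl⟩ := h
  have hr : r.coeff 0 ≠ 0 := by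
    intro hc; apply hg; rw [mul_coeff_zero, hc, mul_zero]
  rw [D_mul σ hf hr]
  exact Dvd.intro _ rfl

lemma isUnit_of_D (σ : F →+* F) {f : F[X]} (h0 : f.coeff 0 ≠ 0) (hu : IsUnit (D σ f)) :
    IsUnit f := by
  have hd : f.natDegree = 0 := by
    rw [← D_natDegree σ h0]; exact natDegree_eq_zero_of_isUnit hu
  rw [eq_C_of_natDegree_eq_zero hd]
  exact isUnit_C.mpr (isUnit_iff_ne_zero.mpr h0)

lemma D_irreducible (σ : F →+* F) (hinv : ∀ a, σ (σ a) = a) {f : F[X]} (hm : f.Monic)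
    (h0 : f.coeff 0 ≠ 0) (hirr : Irreducible f) : Irreducible (D σ f) := by
  constructor
  · intro hu
    have h1 := natDegree_eq_zero_of_isUnit hu
    rw [D_natDegree σ h0] at h1
    exact hirr.natDegree_pos.ne' h1
  · intro a b hab
    have hD0 : (D σ f).coeff 0 ≠ 0 := D_coeff_zero_ne σ h0 hm.ne_zero
    have ha0 : a.coeff 0 ≠ 0 := by
      intro hc; apply hD0; rw [hab, mul_coeff_zero, hc, zero_mul]
    have hb0 : b.coeff 0 ≠ 0 := by
      intro hc; apply hD0; rw [hab, mul_coeff_zero, hc, mul_zero]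
    have hf : f = D σ a * D σ b := by
      rw [← D_mul σ ha0 hb0, ← hab, D_D σ hinv hm h0]
    rcases hirr.isUnit_or_isUnit hf with hu | hu
    · exact Or.inl (isUnit_of_D σ ha0 hu)
    · exact Or.inr (isUnit_of_D σ hb0 hu)

lemma coeff_zero_X_pow_sub_one {n : ℕ} (hn : 0 < n) :
    ((X : F[X]) ^ n - 1).coeff 0 = -1 := by
  rw [coeff_sub, coeff_X_pow, coeff_one, if_neg (by omega), if_pos rfl, zero_sub]

lemma coeff_zero_ne_of_dvd {n : ℕ} (hn : 0 < n) {f : F[X]} (hf : f ∣ (X : F[X]) ^ n - 1) :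
    f.coeff 0 ≠ 0 := by
  obtain ⟨r, hr⟩ := hf
  intro hc
  have h1 : ((X : F[X]) ^ n - 1).coeff 0 = 0 := by rw [hr, mul_coeff_zero, hc, zero_mul]
  rw [coeff_zero_X_pow_sub_one hn] at h1
  exact one_ne_zero (neg_eq_zero.mp h1)

lemma X_pow_sub_one_ne_zero {n : ℕ} (hn : 0 < n) : ((X : F[X]) ^ n - 1) ≠ 0 := by
  intro hc
  have h1 := coeff_zero_X_pow_sub_one (F := F) hn
  rw [hc, coeff_zero] at h1
  exact one_ne_zero (neg_eq_zero.mp h1.symm)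

lemma natDegree_X_pow_sub_one {n : ℕ} : ((X : F[X]) ^ n - 1).natDegree = n := by
  rw [← C_1, natDegree_X_pow_sub_C]

lemma D_X_pow_sub_one (σ : F →+* F) {n : ℕ} (hn : 0 < n) :
    D σ ((X : F[X]) ^ n - 1) = X ^ n - 1 := by
  have hrev : ((X : F[X]) ^ n - 1).reverse = 1 - X ^ n := by
    rw [reverse, natDegree_X_pow_sub_one, reflect_sub, reflect_one, reflect_monomial,
      revAt_le (le_refl n), Nat.sub_self, pow_zero]
  have hcr : crecip ((X : F[X]) ^ n - 1) = X ^ n - 1 := by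
    rw [crecip_def, coeff_zero_X_pow_sub_one hn, hrev, inv_neg, inv_one, map_neg, C_1]
    ring
  rw [D, hcr, Polynomial.map_sub, Polynomial.map_pow, map_X, Polynomial.map_one]

end SCRIMAux

open SCRIMAux

theorem stmt15 {q n : ℕ} (hq : IsPrimePow q)
    {F : Type*} [Field F] [Fintype F] (hF : Fintype.card F = q ^ 2)
    (hn : 0 < n) (g h : F[X])
    (hg : g.Monic) (hgd : g ∣ X ^ n - 1) (hh : X ^ n - 1 = g * h) :
    IsCoprime g (cdagger q h) ↔
      g = cdagger q g ∧
        ∀ p : F[X], p.Monic → Irreducible p → p ∣ g →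
          ∀ k : ℕ, p ^ k ∣ g ↔ p ^ k ∣ X ^ n - 1 := by
  classical
  -- Build the conjugation ring hom `σ : a ↦ a ^ q`.
  obtain ⟨p, k, hpp, hk, hpk⟩ := hq
  have hp : p.Prime := hpp.nat_prime
  haveI : Fact p.Prime := ⟨hp⟩
  obtain ⟨m, hrp, hcard⟩ := FiniteField.card F (ringChar F)
  have hpr : p = ringChar F := by
    have h1 : p ∣ ringChar F ^ (m : ℕ) := by
      rw [← hcard, hF, ← hpk, ← pow_mul]
      exact dvd_pow_self p (Nat.mul_ne_zero hk.ne' (by norm_num))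
    exact (Nat.prime_dvd_prime_iff_eq hp hrp).mp (hp.dvd_of_dvd_pow h1)
  haveI : CharP F p := hpr ▸ ringChar.charP F
  haveI : ExpChar F p := ExpChar.prime hp
  set σ : F →+* F := iterateFrobenius F p k with hσdef
  have hσ : ∀ a : F, σ a = a ^ q := fun a => by
    rw [hσdef, iterateFrobenius_def, hpk]
  have hinv : ∀ a : F, σ (σ a) = a := fun a => by
    rw [hσ, hσ, ← pow_mul, show q * q = Fintype.card F by rw [hF, pow_two]]
    exact FiniteField.pow_card a
  rw [cdagger_eq σ hσ h, cdagger_eq σ hσ g]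
  -- Basic facts.
  have hXne : ((X : F[X]) ^ n - 1) ≠ 0 := X_pow_sub_one_ne_zero hn
  have hg0 : g.coeff 0 ≠ 0 := coeff_zero_ne_of_dvd hn hgd
  have hhd : h ∣ (X : F[X]) ^ n - 1 := ⟨g, by rw [hh, mul_comm]⟩
  have hh0 : h.coeff 0 ≠ 0 := coeff_zero_ne_of_dvd hn hhd
  have hXm : ((X : F[X]) ^ n - 1).Monic := by
    have h1 := monic_X_pow_sub_C (1 : F) hn.ne'
    rwa [C_1] at h1
  have hhm : h.Monic := by
    have h1 := hXm.leadingCoeff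
    rw [hh, leadingCoeff_mul, hg.leadingCoeff, one_mul] at h1
    exact h1
  have hkey : (X : F[X]) ^ n - 1 = D σ g * D σ h := by
    rw [← D_mul σ hg0 hh0, ← hh, D_X_pow_sub_one σ hn]
  constructor
  · intro hco
    -- First: `g` is self-conjugate-reciprocal.
    have hgD : g = D σ g := by
      have hdvd : g ∣ D σ g := hco.dvd_of_dvd_mul_right (hkey ▸ hgd)
      obtain ⟨c, hc⟩ := hdvd
      have h3 : (D σ g) ≠ 0 := (D_monic σ hg0).ne_zero
      have h4 : c ≠ 0 := by rintro rfl; rw [mul_zero] at hc; exact h3 hc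
      have hcd : c.natDegree = 0 := by
        have h2 : (D σ g).natDegree = g.natDegree := D_natDegree σ hg0
        have h5 := congrArg natDegree hc
        rw [natDegree_mul hg.ne_zero h4, h2] at h5
        omega
      have hcm : c.Monic := by
        have hl := (D_monic σ hg0).leadingCoeff
        rw [hc, leadingCoeff_mul, hg.leadingCoeff, one_mul] at hl
        exact hl
      rw [hc, hcm.natDegree_eq_zero.mp hcd, mul_one]
    refine ⟨hgD, fun pp hpm hpi hpg k => ⟨fun hk => hk.trans hgd, fun hk => ?_⟩⟩
    have hpprime : Prime pp := hpi.prime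
    have hp0 : pp.coeff 0 ≠ 0 := coeff_zero_ne_of_dvd hn (hpg.trans hgd)
    have hph : ¬ pp ∣ h := by
      intro hph
      have h1 : D σ pp ∣ D σ h := D_dvd σ hph hp0 hh0
      have h2 : D σ pp ∣ g := by
        have h3 : D σ pp ∣ D σ g := D_dvd σ hpg hp0 hg0
        rwa [← hgD] at h3
      exact (D_irreducible σ hinv hpm hp0 hpi).not_isUnit (hco.isUnit_of_dvd' h2 h1)
    rw [hh] at hk
    exact hpprime.pow_dvd_of_dvd_mul_right k hph hk
  · rintro ⟨hgD, hmult⟩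
    rw [← EuclideanDomain.gcd_isUnit_iff]
    by_contra hnu
    have hdne : EuclideanDomain.gcd g (D σ h) ≠ 0 := by
      intro hc
      exact hg.ne_zero (EuclideanDomain.gcd_eq_zero_iff.mp hc).1
    obtain ⟨r, hri, hrd⟩ := WfDvdMonoid.exists_irreducible_factor hnu hdne
    have hrg : r ∣ g := hrd.trans (EuclideanDomain.gcd_dvd_left _ _)
    have hrh : r ∣ D σ h := hrd.trans (EuclideanDomain.gcd_dvd_right _ _)
    have hrne : r ≠ 0 := hri.ne_zero
    set pp : F[X] := r * C r.leadingCoeff⁻¹ with hppdef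
    have hppm : pp.Monic := monic_mul_leadingCoeff_inv hrne
    have hassoc : Associated r pp :=
      associated_mul_unit_right r _
        (isUnit_C.mpr (isUnit_iff_ne_zero.mpr (inv_ne_zero (leadingCoeff_ne_zero.mpr hrne))))
    have hpi : Irreducible pp := hassoc.irreducible hri
    have hpg : pp ∣ g := hassoc.symm.dvd.trans hrg
    have hph : pp ∣ D σ h := hassoc.symm.dvd.trans hrh
    have hp0 : pp.coeff 0 ≠ 0 := coeff_zero_ne_of_dvd hn (hpg.trans hgd)
    have hDh0 : (D σ h).coeff 0 ≠ 0 := D_coeff_zero_ne σ hh0 hhm.ne_zero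
    have hPg : D σ pp ∣ g := by
      have h1 := D_dvd σ hpg hp0 hg0
      rwa [← hgD] at h1
    have hPh : D σ pp ∣ h := by
      have h1 := D_dvd σ hph hp0 hDh0
      rwa [D_D σ hinv hhm hh0] at h1
    have hPm : (D σ pp).Monic := D_monic σ hp0
    have hPi : Irreducible (D σ pp) := D_irreducible σ hinv hppm hp0 hpi
    have hbound : ∀ j : ℕ, (D σ pp) ^ j ∣ (X : F[X]) ^ n - 1 → j ≤ n := by
      intro j hj
      have h1 := natDegree_le_of_dvd hj hXne
      rw [natDegree_pow, natDegree_X_pow_sub_one] at h1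
      calc j ≤ j * (D σ pp).natDegree := Nat.le_mul_of_pos_right j hPi.natDegree_pos
        _ ≤ n := h1
    set e := Nat.findGreatest (fun j => (D σ pp) ^ j ∣ (X : F[X]) ^ n - 1) n with hedef
    have hP0 : (D σ pp) ^ 0 ∣ (X : F[X]) ^ n - 1 := by
      rw [pow_zero]; exact one_dvd _
    have hPe : (D σ pp) ^ e ∣ (X : F[X]) ^ n - 1 :=
      Nat.findGreatest_spec (P := fun j => (D σ pp) ^ j ∣ (X : F[X]) ^ n - 1)
        (Nat.zero_le n) hP0
    have hPe1 : ¬ (D σ pp) ^ (e + 1) ∣ (X : F[X]) ^ n - 1 := fun hc =>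
      Nat.findGreatest_is_greatest (Nat.lt_succ_self e) (hbound _ hc) hc
    have hPg' : (D σ pp) ^ e ∣ g := (hmult _ hPm hPi hPg e).mpr hPe
    apply hPe1
    rw [pow_succ, hh]
    exact mul_dvd_mul hPg' hPh
end

section
/- Let q be a prime power, t ≥ 2 an integer, R = F_{q^2}[u]/⟨u^t⟩ the finite chain ring F_{q^2} + uF_{q^2} + ... + u^{t−1}F_{q^2}, and n a positive integer with gcd(n,q) = 1. Then there exists a Hermitian self-dual cyclic code of length n over R, i.e., an ideal C of R[x]/⟨x^n − 1⟩ with C = C^{⊥_H}, if and only if t is even. -/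
open Polynomial

/-- The finite chain ring `R = F[u]/⟨uᵗ⟩ = F + uF + ⋯ + u^{t-1}F`. -/
abbrev ChainR (F : Type*) [Field F] (t : ℕ) := AdjoinRoot ((X : F[X]) ^ t)

/-- The codewords of a cyclic code of length `n` over `S`, viewed as the
polynomials of degree `< n` in the ideal `C` of `S[x]` corresponding to the
ideal of `S[x]/⟨x^n - 1⟩`. -/
def codewordsR {S : Type*} [CommRing S] (C : Ideal S[X]) (n : ℕ) : Set S[X] :=
  {f | f ∈ C ∧ f.degree < (n : WithBot ℕ)}

/-- The Hermitian dual code `C^⊥H` (with respect to the conjugation `σ`),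
as a set of polynomials of degree `< n`. -/
def hermDualR {S : Type*} [CommRing S] (σ : S →+* S) (C : Ideal S[X]) (n : ℕ) :
    Set S[X] :=
  {u | u.degree < (n : WithBot ℕ) ∧ ∀ v ∈ C, v.degree < (n : WithBot ℕ) →
      ∑ i ∈ Finset.range n, u.coeff i * σ (v.coeff i) = 0}

/-!
Let `e = 1 + x + ⋯ + x^{n-1}`. Since `x^n - 1 ∈ C`, every `v ∈ C` gives `v(1) e ∈ C`, and the
Hermitian product of `a e` with a codeword `w` is `a σ(w(1))`. When `n` is invertible, self-duality
of `C` therefore forces the set `A = {w(1) : w ∈ C}` to be its own annihilator for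
`(a, b) ↦ a σ(b)`. In `F[u]/⟨uᵗ⟩` every element is `uᵏ` times a unit and `σ` fixes `u`, so `a σ(a)`
vanishes iff `2k ≥ t`; for odd `t = 2m + 1` this is incompatible with `uᵐ ∉ A`.

Conversely, for `t = 2m` the annihilator of `π = uᵐ` is `⟨π⟩`, and the code `⟨π, x^n - 1⟩`, whose
codewords are exactly the words with all coordinates in `⟨π⟩`, is Hermitian self-dual.
-/

def IsSelfAnnihilating {S : Type*} [CommRing S] (σ : S →+* S) (A : Set S) : Prop :=
  ∀ a, a ∈ A ↔ ∀ b ∈ A, a * σ b = 0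

section CyclicCodes

variable {S : Type*} [CommRing S] {σ : S →+* S} {I : Ideal S[X]} {n : ℕ}

lemma sum_range_coeff_eq_eval_one {w : S[X]} (hw : w.degree < n) :
    ∑ i ∈ Finset.range n, w.coeff i = w.eval 1 := by
  rcases eq_or_ne w 0 with rfl | hw0
  · simp
  · rw [eval_eq_sum_range' ((natDegree_lt_iff_degree_lt hw0).mpr hw)]
    simp

lemma coeff_C_mul_geom_sum (a : S) (i : ℕ) :
    (C a * ∑ j ∈ Finset.range n, (X : S[X]) ^ j).coeff i = if i < n then a else 0 := by
  simp [finsetSum_coeff, coeff_X_pow]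

lemma degree_C_mul_geom_sum_lt (a : S) :
    (C a * ∑ j ∈ Finset.range n, (X : S[X]) ^ j).degree < n :=
  (degree_lt_iff_coeff_zero _ _).mpr fun i hi => by
    rw [coeff_C_mul_geom_sum, if_neg hi.not_gt]

lemma sum_coeff_C_mul_geom_sum_mul_map_coeff (a : S) {w : S[X]}
    (hw : w.degree < n) :
    ∑ i ∈ Finset.range n, (C a * ∑ j ∈ Finset.range n, (X : S[X]) ^ j).coeff i * σ (w.coeff i)
      = a * σ (w.eval 1) := by
  simp only [coeff_C_mul_geom_sum]
  rw [← sum_range_coeff_eq_eval_one hw, map_sum σ, Finset.mul_sum]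
  exact Finset.sum_congr rfl fun i hi => by rw [if_pos (Finset.mem_range.mp hi)]

lemma C_eval_one_mul_geom_sum_mem (hX : (X : S[X]) ^ n - 1 ∈ I) {v : S[X]} (hv : v ∈ I) :
    C (v.eval 1) * ∑ j ∈ Finset.range n, (X : S[X]) ^ j ∈ I := by
  obtain ⟨h, hh⟩ := dvd_iff_isRoot.mpr (show (v - C (v.eval 1)).IsRoot 1 by simp)
  rw [C_1] at hh
  have hgeom := geom_sum_mul (X : S[X]) n
  have hv' : C (v.eval 1) * ∑ j ∈ Finset.range n, (X : S[X]) ^ j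
      = (∑ j ∈ Finset.range n, (X : S[X]) ^ j) * v - (X ^ n - 1) * h := by
    linear_combination (-∑ j ∈ Finset.range n, (X : S[X]) ^ j) * hh - h * hgeom
  rw [hv']
  exact I.sub_mem (I.mul_mem_left _ hv) (I.mul_mem_right _ hX)

theorem isSelfAnnihilating_eval_one_image (hX : (X : S[X]) ^ n - 1 ∈ I)
    (hI : codewordsR I n = hermDualR σ I n) (hn : IsUnit (n : S)) :
    IsSelfAnnihilating σ (eval 1 '' codewordsR I n) := by
  intro a
  constructor
  · rintro ⟨v, hv, rfl⟩ _ ⟨w, hw, rfl⟩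
    have hmem : C (v.eval 1) * ∑ j ∈ Finset.range n, (X : S[X]) ^ j ∈ hermDualR σ I n :=
      hI ▸ ⟨C_eval_one_mul_geom_sum_mem hX hv.1, degree_C_mul_geom_sum_lt _⟩
    rw [← sum_coeff_C_mul_geom_sum_mul_map_coeff _ hw.2]
    exact hmem.2 w hw.1 hw.2
  · intro ha
    obtain ⟨c, hc⟩ := hn.exists_left_inv
    refine ⟨C (a * c) * ∑ j ∈ Finset.range n, (X : S[X]) ^ j, ?_, ?_⟩
    · rw [hI]
      refine ⟨degree_C_mul_geom_sum_lt _, fun w hw hwn => ?_⟩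
      rw [sum_coeff_C_mul_geom_sum_mul_map_coeff _ hwn, mul_right_comm,
        ha _ ⟨w, ⟨hw, hwn⟩, rfl⟩, zero_mul]
    · simp [eval_geom_sum, mul_assoc, hc]

lemma dvd_coeff_of_mem_span_C_X_pow_sub_one {π : S} (hn : 0 < n) {g : S[X]}
    (hg : g ∈ Ideal.span {C π, X ^ n - 1}) (hgn : g.degree < n) (i : ℕ) : π ∣ g.coeff i := by
  by_cases hπ : IsUnit π
  · exact hπ.dvd
  have : Nontrivial (S ⧸ Ideal.span {π}) :=
    Ideal.Quotient.nontrivial_iff.mpr (by rwa [Ne, Ideal.span_singleton_eq_top])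
  obtain ⟨a, b, rfl⟩ := Ideal.mem_span_pair.mp hg
  set φ := Ideal.Quotient.mk (Ideal.span {π})
  have hφπ : φ π = 0 := Ideal.Quotient.eq_zero_iff_mem.mpr (Ideal.mem_span_singleton_self π)
  -- modulo `π`, `g` is a multiple of the monic `X ^ n - 1` of degree `< n`
  have hmon : (X ^ n - C 1 : (S ⧸ Ideal.span {π})[X]).Monic := monic_X_pow_sub_C 1 hn.ne'
  have hdvd : X ^ n - C 1 ∣ (a * C π + b * (X ^ n - 1)).map φ :=
    ⟨b.map φ, by simp [hφπ, mul_comm]⟩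
  have hzero : (a * C π + b * (X ^ n - 1)).map φ = 0 := by
    by_contra h0
    refine hmon.not_dvd_of_degree_lt h0 ?_ hdvd
    rw [degree_X_pow_sub_C hn]
    exact degree_map_le.trans_lt hgn
  rw [← Ideal.mem_span_singleton, ← Ideal.Quotient.eq_zero_iff_mem, ← coeff_map, hzero,
    coeff_zero]

theorem codewordsR_span_eq_hermDualR {π : S} (hπ : ∀ a, a * π = 0 ↔ π ∣ a) (hσπ : σ π = π)
    (hn : 0 < n) :
    codewordsR (Ideal.span {C π, X ^ n - 1}) n = hermDualR σ (Ideal.span {C π, X ^ n - 1}) n := by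
  have hππ : π * π = 0 := (hπ π).mpr dvd_rfl
  ext f
  constructor
  · rintro ⟨hf, hfn⟩
    refine ⟨hfn, fun v hv hvn => Finset.sum_eq_zero fun i _ => ?_⟩
    obtain ⟨x, hx⟩ := dvd_coeff_of_mem_span_C_X_pow_sub_one hn hf hfn i
    obtain ⟨y, hy⟩ := dvd_coeff_of_mem_span_C_X_pow_sub_one hn hv hvn i
    rw [hx, hy, map_mul, hσπ, mul_mul_mul_comm, hππ, zero_mul]
  · rintro ⟨hfn, hf⟩
    refine ⟨?_, hfn⟩
    have hdvd (j : ℕ) : π ∣ f.coeff j := by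
      rcases lt_or_ge j n with hj | hj
      · have h := hf (C π * X ^ j) (Ideal.mul_mem_right _ _ (Ideal.subset_span (by simp)))
          ((degree_C_mul_X_pow_le j π).trans_lt (by exact_mod_cast hj))
        simpa [coeff_C_mul_X_pow, apply_ite σ, hσπ, hj, ← hπ] using h
      · rw [coeff_eq_zero_of_degree_lt (hfn.trans_le (by exact_mod_cast hj))]
        exact dvd_zero _
    obtain ⟨g, rfl⟩ := (C_dvd_iff_dvd_coeff π f).mpr hdvd
    exact Ideal.mul_mem_right _ _ (Ideal.subset_span (by simp))

end CyclicCodes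

lemma natCast_ne_zero_of_coprime_card {F : Type*} [Field F] [Fintype F] {n : ℕ}
    (h : n.Coprime (Fintype.card F)) : (n : F) ≠ 0 := fun hn =>
  CharP.ringChar_ne_one <| Nat.Coprime.eq_one_of_dvd
    (Nat.Coprime.coprime_dvd_left (ringChar.dvd hn) h) (ringChar.dvd (Nat.cast_card_eq_zero F))

namespace ChainR

variable {F : Type*} [Field F] {t : ℕ}

local notation "ρ" => AdjoinRoot.root ((X : F[X]) ^ t)

lemma root_pow_eq_zero_iff {s : ℕ} : ρ ^ s = 0 ↔ t ≤ s := by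
  rw [← AdjoinRoot.mk_X, ← map_pow, AdjoinRoot.mk_eq_zero, pow_dvd_pow_iff X_ne_zero not_isUnit_X]

lemma root_pow_mul_eq_zero_iff {s : ℕ} {u : ChainR F t} (hu : IsUnit u) :
    ρ ^ s * u = 0 ↔ t ≤ s := by
  rw [hu.mul_left_eq_zero, root_pow_eq_zero_iff]

lemma exists_eq_root_pow_mul (a : ChainR F t) : ∃ k u, IsUnit u ∧ a = ρ ^ k * u := by
  obtain ⟨g, rfl⟩ := AdjoinRoot.mk_surjective a
  rcases eq_or_ne g 0 with rfl | hg
  · exact ⟨t, 1, isUnit_one, by rw [map_zero, root_pow_eq_zero_iff.mpr le_rfl, zero_mul]⟩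
  obtain ⟨h, hgh, hXh⟩ := g.exists_eq_pow_rootMultiplicity_mul_and_not_dvd hg 0
  rw [map_zero, sub_zero] at hgh hXh
  refine ⟨_, AdjoinRoot.mk _ h, ?_, by rw [hgh, map_mul, map_pow, AdjoinRoot.mk_X]⟩
  obtain ⟨c, d, hcd⟩ := (irreducible_X.coprime_iff_not_dvd.mpr hXh).pow_left (m := t)
  refine .of_mul_eq_one (AdjoinRoot.mk _ d) ?_
  rw [← map_mul, ← map_one (AdjoinRoot.mk _), AdjoinRoot.mk_eq_mk]
  exact ⟨-c, by linear_combination hcd⟩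

lemma mul_root_pow_eq_zero_iff {s : ℕ} {a : ChainR F t} : a * ρ ^ s = 0 ↔ ρ ^ (t - s) ∣ a := by
  constructor
  · intro h
    obtain ⟨k, u, hu, rfl⟩ := exists_eq_root_pow_mul a
    rw [mul_right_comm, ← pow_add, root_pow_mul_eq_zero_iff hu] at h
    exact dvd_mul_of_dvd_left (pow_dvd_pow _ (by omega)) u
  · rintro ⟨c, rfl⟩
    rw [mul_right_comm, ← pow_add, root_pow_eq_zero_iff.mpr (by omega), zero_mul]

theorem not_isSelfAnnihilating_of_odd {σ : ChainR F t →+* ChainR F t} (hσ : σ ρ = ρ)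
    (ht : Odd t) (A : Set (ChainR F t)) : ¬IsSelfAnnihilating σ A := by
  obtain ⟨m, hm⟩ := ht
  intro hA
  have hmA : ρ ^ m ∉ A := fun h => by
    have h0 := (hA _).mp h _ h
    rw [map_pow, hσ, ← pow_add, root_pow_eq_zero_iff] at h0
    omega
  obtain ⟨b, hb, hmb⟩ : ∃ b ∈ A, ρ ^ m * σ b ≠ 0 := by
    by_contra! h
    exact hmA ((hA _).mpr h)
  obtain ⟨k, u, hu, rfl⟩ := exists_eq_root_pow_mul b
  have hbb := (hA _).mp hb _ hb
  rw [map_mul, map_pow, hσ] at hbb hmb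
  rw [mul_mul_mul_comm, ← pow_add, root_pow_mul_eq_zero_iff (hu.mul (hu.map σ))] at hbb
  rw [← mul_assoc, ← pow_add, Ne, root_pow_mul_eq_zero_iff (hu.map σ)] at hmb
  omega

end ChainR

theorem stmt19_general {q t n : ℕ}
    {F : Type*} [Field F] [Fintype F] (hF : Fintype.card F = q ^ 2)
    (hn : 0 < n) (hgcd : Nat.Coprime n q)
    (σR : ChainR F t →+* ChainR F t)
    (hσ2 : σR (AdjoinRoot.root ((X : F[X]) ^ t)) = AdjoinRoot.root ((X : F[X]) ^ t)) :
    (∃ C : Ideal (Polynomial (ChainR F t)),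
        (X : Polynomial (ChainR F t)) ^ n - 1 ∈ C ∧
        codewordsR C n = hermDualR σR C n) ↔ Even t := by
  constructor
  · rintro ⟨C, hX, hC⟩
    by_contra hodd
    have hnF : (n : F) ≠ 0 := natCast_ne_zero_of_coprime_card (hF ▸ hgcd.pow_right 2)
    have hnR : IsUnit (n : ChainR F t) := by
      simpa using hnF.isUnit.map (AdjoinRoot.of ((X : F[X]) ^ t))
    exact ChainR.not_isSelfAnnihilating_of_odd hσ2 (Nat.not_even_iff_odd.mp hodd) _
      (isSelfAnnihilating_eval_one_image hX hC hnR)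
  · rintro ⟨m, rfl⟩
    refine ⟨_, Ideal.subset_span (by simp), codewordsR_span_eq_hermDualR
      (π := AdjoinRoot.root _ ^ m) (fun a => ?_) (by rw [map_pow, hσ2]) hn⟩
    rw [ChainR.mul_root_pow_eq_zero_iff, Nat.add_sub_cancel]

theorem stmt19 {q t n : ℕ} (hq : IsPrimePow q) (ht : 2 ≤ t)
    {F : Type*} [Field F] [Fintype F] (hF : Fintype.card F = q ^ 2)
    (hn : 0 < n) (hgcd : Nat.Coprime n q)
    (σR : ChainR F t →+* ChainR F t)
    (hσ1 : ∀ c : F, σR (AdjoinRoot.of ((X : F[X]) ^ t) c)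
        = AdjoinRoot.of ((X : F[X]) ^ t) (c ^ q))
    (hσ2 : σR (AdjoinRoot.root ((X : F[X]) ^ t)) = AdjoinRoot.root ((X : F[X]) ^ t)) :
    (∃ C : Ideal (Polynomial (ChainR F t)),
        (X : Polynomial (ChainR F t)) ^ n - 1 ∈ C ∧
        codewordsR C n = hermDualR σR C n) ↔ Even t :=
  stmt19_general hF hn hgcd σR hσ2
end
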